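/- arXiv:1205.0755 — 3 statements merged into one kernel-verified Lean document; each statement's English description precedes it below -/
import Mathlib

section
/- Let c > 0 and B > 0 with cB < 1, and let ζ_0, ζ_1, …, ζ_J (J ∈ ℕ arbitrary) be nonnegative random variables on a common probability space (no independence assumed) such that E[exp(c' ζ_j²)] ≤ (1 − c'B)^{−1} for every j and every c' ∈ (0, c]. Set Y = Σ_{j=0}^{J} e^{−2j} ζ_j. Then there exist constants c* > 0 and C* > 0, depending only on c and B (and in particular independent of J and of the random variables), such that E[exp(c* Y²)] ≤ C*. -/
/-!
Write `Y = S * ∑ p_j ζ_j` with `S = ∑_{j ≤ J} e^{-2j} ≤ 2` and `p_j = e^{-2j} / S`, a probability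
vector. Then `(c / 4) Y² ≤ c (∑ p_j ζ_j)²`, and Jensen's inequality for the convex function
`x ↦ exp (c x²)` bounds `E[exp ((c / 4) Y²)]` by the largest `E[exp (c ζ_j²)] ≤ (1 - c B)⁻¹`.
-/

open MeasureTheory Finset Real Set
open scoped ENNReal

theorem sum_range_exp_neg_two_mul_le_two (n : ℕ) :
    ∑ j ∈ range n, exp (-2 * (j : ℝ)) ≤ 2 := by
  have hr : exp (-2) ≤ 1 / 2 := by
    rw [exp_neg, inv_le_comm₀ (exp_pos 2) (by norm_num)]
    linarith [add_one_le_exp (2 : ℝ)]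
  calc ∑ j ∈ range n, exp (-2 * (j : ℝ)) = ∑ j ∈ Ico 0 n, exp (-2) ^ j := by
        rw [range_eq_Ico]
        refine sum_congr rfl fun j _ => ?_
        rw [← exp_nat_mul, mul_comm]
    _ ≤ exp (-2) ^ 0 / (1 - exp (-2)) :=
        geom_sum_Ico_le_of_lt_one (exp_pos _).le (by linarith)
    _ ≤ 2 := by
        rw [pow_zero, div_le_iff₀ (by linarith)]
        linarith

theorem convexOn_exp_mul_sq {a : ℝ} (ha : 0 ≤ a) :
    ConvexOn ℝ univ fun x : ℝ => exp (a * x ^ 2) := by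
  refine ⟨convex_univ, fun x _ y _ s t hs ht hst => ?_⟩
  have hsq := ((even_two.convexOn_pow (𝕜 := ℝ)).smul ha).2 (mem_univ x) (mem_univ y) hs ht hst
  simp only [smul_eq_mul] at hsq ⊢
  calc exp (a * (s * x + t * y) ^ 2) ≤ exp (s * (a * x ^ 2) + t * (a * y ^ 2)) :=
        exp_le_exp.2 hsq
    _ ≤ s * exp (a * x ^ 2) + t * exp (a * y ^ 2) := by
        simpa only [smul_eq_mul] using
          convexOn_exp.2 (mem_univ (a * x ^ 2)) (mem_univ (a * y ^ 2)) hs ht hst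

section Jensen

variable {Ω ι : Type*} [MeasurableSpace Ω] {μ : Measure Ω} {φ : ℝ → ℝ} {s : Finset ι}
  {p : ι → ℝ} {X : ι → Ω → ℝ}

theorem ConvexOn.lintegral_ofReal_comp_sum_le (hφ : ConvexOn ℝ univ φ) (hφm : Measurable φ)
    (hφ0 : ∀ x, 0 ≤ φ x) (hp0 : ∀ i ∈ s, 0 ≤ p i) (hp1 : ∑ i ∈ s, p i = 1)
    (hX : ∀ i ∈ s, Measurable (X i)) :
    ∫⁻ ω, ENNReal.ofReal (φ (∑ i ∈ s, p i * X i ω)) ∂μ ≤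
      ∑ i ∈ s, ENNReal.ofReal (p i) * ∫⁻ ω, ENNReal.ofReal (φ (X i ω)) ∂μ := by
  have jensen : ∀ ω, ENNReal.ofReal (φ (∑ i ∈ s, p i * X i ω)) ≤
      ∑ i ∈ s, ENNReal.ofReal (p i) * ENNReal.ofReal (φ (X i ω)) := fun ω => by
    calc ENNReal.ofReal (φ (∑ i ∈ s, p i * X i ω))
        ≤ ENNReal.ofReal (∑ i ∈ s, p i * φ (X i ω)) :=
          ENNReal.ofReal_le_ofReal (hφ.map_sum_le hp0 hp1 fun i _ => mem_univ (X i ω))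
      _ = ∑ i ∈ s, ENNReal.ofReal (p i) * ENNReal.ofReal (φ (X i ω)) := by
          rw [ENNReal.ofReal_sum_of_nonneg fun i hi => mul_nonneg (hp0 i hi) (hφ0 _)]
          exact sum_congr rfl fun i hi => ENNReal.ofReal_mul (hp0 i hi)
  have hmeas : ∀ i ∈ s, Measurable fun ω => ENNReal.ofReal (φ (X i ω)) := fun i hi =>
    ENNReal.measurable_ofReal.comp (hφm.comp (hX i hi))
  calc ∫⁻ ω, ENNReal.ofReal (φ (∑ i ∈ s, p i * X i ω)) ∂μ
      ≤ ∫⁻ ω, ∑ i ∈ s, ENNReal.ofReal (p i) * ENNReal.ofReal (φ (X i ω)) ∂μ :=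
        lintegral_mono jensen
    _ = ∑ i ∈ s, ENNReal.ofReal (p i) * ∫⁻ ω, ENNReal.ofReal (φ (X i ω)) ∂μ := by
        rw [lintegral_finsetSum _ fun i hi => (hmeas i hi).const_mul _]
        exact sum_congr rfl fun i hi => lintegral_const_mul _ (hmeas i hi)

theorem ConvexOn.lintegral_ofReal_comp_sum_le_of_forall_le (hφ : ConvexOn ℝ univ φ)
    (hφm : Measurable φ) (hφ0 : ∀ x, 0 ≤ φ x) (hp0 : ∀ i ∈ s, 0 ≤ p i) (hp1 : ∑ i ∈ s, p i = 1)
    (hX : ∀ i ∈ s, Measurable (X i)) {M : ℝ≥0∞}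
    (hM : ∀ i ∈ s, ∫⁻ ω, ENNReal.ofReal (φ (X i ω)) ∂μ ≤ M) :
    ∫⁻ ω, ENNReal.ofReal (φ (∑ i ∈ s, p i * X i ω)) ∂μ ≤ M :=
  calc _ ≤ ∑ i ∈ s, ENNReal.ofReal (p i) * ∫⁻ ω, ENNReal.ofReal (φ (X i ω)) ∂μ :=
        hφ.lintegral_ofReal_comp_sum_le hφm hφ0 hp0 hp1 hX
    _ ≤ ∑ i ∈ s, ENNReal.ofReal (p i) * M := sum_le_sum fun i hi => by gcongr; exact hM i hi
    _ = M := by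
        rw [← sum_mul, ← ENNReal.ofReal_sum_of_nonneg hp0, hp1, ENNReal.ofReal_one, one_mul]

end Jensen

theorem exp_moment_geometric_weighted_sum_general
    (c B : ℝ) (hc : 0 < c) (hcB : c * B < 1) :
    ∃ cs Cs : ℝ, 0 < cs ∧ 0 < Cs ∧
      ∀ (Ω : Type) (mΩ : MeasurableSpace Ω) (μ : Measure Ω), IsProbabilityMeasure μ →
        ∀ (J : ℕ) (ζ : ℕ → Ω → ℝ),
          (∀ j, j ≤ J → Measurable (ζ j)) →
          (∀ j ω, j ≤ J → 0 ≤ ζ j ω) →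
          (∀ j, j ≤ J → ∀ c' : ℝ, 0 < c' → c' ≤ c →
            ∫⁻ ω, ENNReal.ofReal (Real.exp (c' * ζ j ω ^ 2)) ∂μ ≤
              ENNReal.ofReal ((1 - c' * B)⁻¹)) →
          ∫⁻ ω, ENNReal.ofReal
              (Real.exp (cs * (∑ j ∈ Finset.range (J + 1),
                Real.exp (-2 * (j : ℝ)) * ζ j ω) ^ 2)) ∂μ ≤ ENNReal.ofReal Cs := by
  refine ⟨c / 4, (1 - c * B)⁻¹, by positivity, inv_pos.2 (by linarith), ?_⟩
  intro Ω _ μ _ J ζ hmeas _ hexp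
  set w : ℕ → ℝ := fun j => exp (-2 * (j : ℝ))
  set S := ∑ j ∈ range (J + 1), w j
  have hS0 : 0 < S := sum_pos (fun j _ => exp_pos _) nonempty_range_add_one
  have hcS : c / 4 * S ^ 2 ≤ c := by
    have hS2 : S ≤ 2 := sum_range_exp_neg_two_mul_le_two (J + 1)
    have hS4 : S ^ 2 ≤ 2 ^ 2 := pow_le_pow_left₀ hS0.le hS2 2
    linarith [mul_le_mul_of_nonneg_left hS4 (by positivity : 0 ≤ c / 4)]
  have hp1 : ∑ j ∈ range (J + 1), w j / S = 1 := by rw [← sum_div, div_self hS0.ne']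
  have hpointwise : ∀ ω, exp (c / 4 * (∑ j ∈ range (J + 1), w j * ζ j ω) ^ 2) ≤
      exp (c * (∑ j ∈ range (J + 1), w j / S * ζ j ω) ^ 2) := fun ω => by
    have hY : ∑ j ∈ range (J + 1), w j * ζ j ω = S * ∑ j ∈ range (J + 1), w j / S * ζ j ω := by
      rw [mul_sum]
      exact sum_congr rfl fun j _ => by field_simp
    rw [exp_le_exp, hY, mul_pow, ← mul_assoc]
    exact mul_le_mul_of_nonneg_right hcS (sq_nonneg _)
  calc _ ≤ ∫⁻ ω, ENNReal.ofReal (exp (c * (∑ j ∈ range (J + 1), w j / S * ζ j ω) ^ 2)) ∂μ :=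
        lintegral_mono fun ω => ENNReal.ofReal_le_ofReal (hpointwise ω)
    _ ≤ _ := (convexOn_exp_mul_sq hc.le).lintegral_ofReal_comp_sum_le_of_forall_le
        (by fun_prop) (fun _ => (exp_pos _).le) (fun j _ => by positivity) hp1
        (fun j hj => hmeas j (mem_range_succ_iff.1 hj))
        (fun j hj => hexp j (mem_range_succ_iff.1 hj) c hc le_rfl)

/-- Exponential moments of a geometrically weighted sum: if `0 < c`, `0 < B`, `cB < 1`,
and nonnegative random variables `ζ_0, …, ζ_J` satisfy
`E[exp(c' ζ_j²)] ≤ (1 − c'B)⁻¹` for all `0 < c' ≤ c`, then setting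
`Y = Σ_{j=0}^J e^{−2j} ζ_j` one has `E[exp(c* Y²)] ≤ C*` for constants `c*, C* > 0`
depending only on `c` and `B` (independent of `J` and of the random variables). -/
theorem exp_moment_geometric_weighted_sum
    (c B : ℝ) (hc : 0 < c) (hB : 0 < B) (hcB : c * B < 1) :
    ∃ cs Cs : ℝ, 0 < cs ∧ 0 < Cs ∧
      ∀ (Ω : Type) (mΩ : MeasurableSpace Ω) (μ : Measure Ω), IsProbabilityMeasure μ →
        ∀ (J : ℕ) (ζ : ℕ → Ω → ℝ),
          (∀ j, j ≤ J → Measurable (ζ j)) →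
          (∀ j ω, j ≤ J → 0 ≤ ζ j ω) →
          (∀ j, j ≤ J → ∀ c' : ℝ, 0 < c' → c' ≤ c →
            ∫⁻ ω, ENNReal.ofReal (Real.exp (c' * ζ j ω ^ 2)) ∂μ ≤
              ENNReal.ofReal ((1 - c' * B)⁻¹)) →
          ∫⁻ ω, ENNReal.ofReal
              (Real.exp (cs * (∑ j ∈ Finset.range (J + 1),
                Real.exp (-2 * (j : ℝ)) * ζ j ω) ^ 2)) ∂μ ≤ ENNReal.ofReal Cs :=
  exp_moment_geometric_weighted_sum_general c B hc hcB
end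

section
/- Let (Ω, F, P) be a probability space and X : Ω × [0,∞) → [0,∞) a jointly measurable nonnegative process; set S_t(ω) = ∫₀ᵗ X(ω,s) ds. Suppose there are constants λ > 0, C > 0, c₁ ≥ 0, c₂ > 0 such that E[exp(λ S_n)] ≤ C exp(c₁ + c₂ n) for every integer n ≥ 1. Set K = λ^{−1}(c₂ + 1). Then for every ρ ∈ ℝ, P{ sup_{t ≥ 0} ( S_t − K t ) ≥ ρ } ≤ C' exp(c₁ − λρ), where C' = C e^{λK}/(e − 1). -/
/-!
On the event `sup_{t ≥ 0} (S_t − K t) ≥ ρ`, monotonicity of `t ↦ S_t` gives, for every `r < ρ`,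
some integer `n` with `S_{n+1} ≥ r + K n`. By the exponential Chebyshev inequality this has
probability at most `C exp(c₁ + c₂ (n + 1) − λ (r + K n)) = C e^{λK} e^{c₁ − λr} e^{−(n+1)}`,
since `λK = c₂ + 1`; summing the geometric series gives the bound at `r`, and letting `r ↑ ρ`
gives it at `ρ` (the supremum need not be attained, hence the detour through `r < ρ`).
-/

open MeasureTheory ENNReal Set Filter Topology

noncomputable def expMul (lam : ℝ) (x : ℝ≥0∞) : ℝ≥0∞ :=
  if x = ⊤ then ⊤ else ENNReal.ofReal (Real.exp (lam * x.toReal))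

lemma measurable_expMul (lam : ℝ) : Measurable (expMul lam) :=
  Measurable.ite (measurableSet_singleton ⊤) measurable_const (by fun_prop)

lemma ofReal_exp_mul_le_expMul {lam a : ℝ} {x : ℝ≥0∞} (hlam : 0 ≤ lam)
    (h : ENNReal.ofReal a ≤ x) : ENNReal.ofReal (Real.exp (lam * a)) ≤ expMul lam x := by
  unfold expMul
  split_ifs with hx
  · exact le_top
  · gcongr
    exact (ENNReal.ofReal_le_iff_le_toReal hx).1 h

lemma measure_ofReal_le_le_of_lintegral_expMul_le {Ω : Type*} {mΩ : MeasurableSpace Ω}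
    {μ : Measure Ω} {Y : Ω → ℝ≥0∞} (hY : Measurable Y) {lam B : ℝ} (hlam : 0 ≤ lam)
    (hB : ∫⁻ ω, expMul lam (Y ω) ∂μ ≤ ENNReal.ofReal B) (a : ℝ) :
    μ {ω | ENNReal.ofReal a ≤ Y ω} ≤ ENNReal.ofReal (B * Real.exp (-(lam * a))) := by
  have hexp : 0 < Real.exp (lam * a) := Real.exp_pos _
  have hmarkov : ENNReal.ofReal (Real.exp (lam * a)) * μ {ω | ENNReal.ofReal a ≤ Y ω} ≤
      ENNReal.ofReal B :=
    calc _ ≤ ENNReal.ofReal (Real.exp (lam * a)) *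
          μ {ω | ENNReal.ofReal (Real.exp (lam * a)) ≤ expMul lam (Y ω)} :=
          mul_le_mul_right (measure_mono fun ω hω => ofReal_exp_mul_le_expMul hlam hω) _
      _ ≤ ∫⁻ ω, expMul lam (Y ω) ∂μ :=
          mul_meas_ge_le_lintegral₀ ((measurable_expMul lam).comp hY).aemeasurable _
      _ ≤ ENNReal.ofReal B := hB
  rw [Real.exp_neg, ← div_eq_mul_inv, ENNReal.ofReal_div_of_pos hexp,
    ENNReal.le_div_iff_mul_le (Or.inl (by simpa using hexp)) (Or.inl ofReal_ne_top), mul_comm]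
  exact hmarkov

lemma monotone_setLIntegral_Ioc (f : ℝ → ℝ≥0∞) (a : ℝ) :
    Monotone fun t => ∫⁻ s in Ioc a t, f s :=
  fun _ _ htu => lintegral_mono_set (Ioc_subset_Ioc_right htu)

lemma exists_nat_ofReal_add_le_of_le_iSup_tsub {g : ℝ → ℝ≥0∞} (hg : Monotone g) {K r ρ : ℝ}
    (hK : 0 ≤ K) (hr : r < ρ)
    (h : ENNReal.ofReal ρ ≤ ⨆ (t : ℝ) (_ : 0 ≤ t), (g t - ENNReal.ofReal (K * t))) :
    ∃ n : ℕ, ENNReal.ofReal (r + K * n) ≤ g (n + 1) := by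
  rcases le_or_gt r 0 with hr0 | hr0
  · exact ⟨0, by simp [ENNReal.ofReal_of_nonpos hr0]⟩
  have hlt := ((ENNReal.ofReal_lt_ofReal_iff_of_nonneg hr0.le).2 hr).trans_le h
  obtain ⟨t, hlt⟩ := lt_iSup_iff.1 hlt
  obtain ⟨ht, hlt⟩ := lt_iSup_iff.1 hlt
  refine ⟨⌊t⌋₊, ?_⟩
  calc ENNReal.ofReal (r + K * ⌊t⌋₊)
      ≤ ENNReal.ofReal (r + K * t) := by gcongr; exact Nat.floor_le ht
    _ = ENNReal.ofReal r + ENNReal.ofReal (K * t) := ENNReal.ofReal_add hr0.le (by positivity)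
    _ ≤ g t := (lt_tsub_iff_right.1 hlt).le
    _ ≤ g (⌊t⌋₊ + 1) := hg (Nat.lt_floor_add_one t).le

lemma tsum_exp_neg_one_pow_succ : ∑' n : ℕ, Real.exp (-1) ^ (n + 1) = 1 / (Real.exp 1 - 1) := by
  have h0 : 0 ≤ Real.exp (-1) := (Real.exp_pos _).le
  have h1 : Real.exp (-1) < 1 := Real.exp_lt_one_iff.2 (by norm_num)
  have he : Real.exp 1 - 1 ≠ 0 := (sub_pos.2 (Real.one_lt_exp_iff.2 one_pos)).ne'
  simp_rw [pow_succ', tsum_mul_left, tsum_geometric_of_lt_one h0 h1, Real.exp_neg]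
  field_simp

lemma tsum_ofReal_mul_exp_neg_one_pow_succ {A : ℝ} (hA : 0 ≤ A) :
    ∑' n : ℕ, ENNReal.ofReal (A * Real.exp (-1) ^ (n + 1)) =
      ENNReal.ofReal (A / (Real.exp 1 - 1)) := by
  have h1 : Real.exp (-1) < 1 := Real.exp_lt_one_iff.2 (by norm_num)
  have hsum : Summable fun n : ℕ => A * Real.exp (-1) ^ (n + 1) :=
    ((summable_geometric_of_lt_one (Real.exp_pos _).le h1).comp_injective
      (add_left_injective 1)).mul_left A
  rw [← ENNReal.ofReal_tsum_of_nonneg (fun n => by positivity) hsum, tsum_mul_left,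
    tsum_exp_neg_one_pow_succ, mul_one_div]

lemma le_ofReal_of_forall_lt {a : ℝ≥0∞} {f : ℝ → ℝ} {ρ : ℝ} (hf : ContinuousAt f ρ)
    (h : ∀ r < ρ, a ≤ ENNReal.ofReal (f r)) : a ≤ ENNReal.ofReal (f ρ) :=
  ge_of_tendsto ((ENNReal.continuous_ofReal.continuousAt.comp hf).tendsto.mono_left
    nhdsWithin_le_nhds) (eventually_nhdsWithin_of_forall (s := Iio ρ) h)

lemma exp_chebyshev_bound_eq_geometric {lam K C c₁ c₂ r : ℝ} (hlamK : lam * K = c₂ + 1) (n : ℕ) :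
    C * Real.exp (c₁ + c₂ * (n + 1)) * Real.exp (-(lam * (r + K * n))) =
      C * Real.exp (lam * K) * Real.exp (c₁ - lam * r) * Real.exp (-1) ^ (n + 1) := by
  rw [← Real.exp_nat_mul, mul_assoc, mul_assoc, ← Real.exp_add, ← Real.exp_add,
    mul_assoc, ← Real.exp_add]
  congr 2
  push_cast
  linear_combination (-1 - (n : ℝ)) * hlamK

theorem tail_estimate_sup_integral_minus_linear_general
    {Ω : Type*} {mΩ : MeasurableSpace Ω} (μ : Measure Ω)
    (X : Ω → ℝ → NNReal) (hX : Measurable (Function.uncurry X))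
    (S : ℝ → Ω → ℝ≥0∞)
    (hS : ∀ t ω, S t ω = ∫⁻ s in Set.Ioc (0 : ℝ) t, (X ω s : ℝ≥0∞))
    (lam C c₁ c₂ : ℝ) (hlam : 0 < lam) (hC : 0 < C) (hc₂ : 0 < c₂)
    (hmom : ∀ n : ℕ, 1 ≤ n →
      ∫⁻ ω, (if S (n : ℝ) ω = ⊤ then ⊤
             else ENNReal.ofReal (Real.exp (lam * (S (n : ℝ) ω).toReal))) ∂μ ≤
        ENNReal.ofReal (C * Real.exp (c₁ + c₂ * n)))
    (K : ℝ) (hK : K = lam⁻¹ * (c₂ + 1)) (ρ : ℝ) :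
    μ {ω | ENNReal.ofReal ρ ≤
        ⨆ (t : ℝ) (_ : 0 ≤ t), (S t ω - ENNReal.ofReal (K * t))} ≤
      ENNReal.ofReal (C * Real.exp (lam * K) / (Real.exp 1 - 1) *
        Real.exp (c₁ - lam * ρ)) := by
  obtain rfl : S = fun t ω => ∫⁻ s in Ioc 0 t, (X ω s : ℝ≥0∞) := funext₂ hS
  have hlamK : lam * K = c₂ + 1 := by rw [hK]; field_simp
  have hK0 : 0 ≤ K := by rw [hK]; positivity
  have hstep (r : ℝ) (n : ℕ) :
      μ {ω | ENNReal.ofReal (r + K * n) ≤ ∫⁻ s in Ioc 0 (n + 1 : ℝ), (X ω s : ℝ≥0∞)} ≤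
        ENNReal.ofReal (C * Real.exp (lam * K) * Real.exp (c₁ - lam * r) *
          Real.exp (-1) ^ (n + 1)) := by
    have hmom' := hmom (n + 1) (Nat.le_add_left 1 n)
    push_cast at hmom'
    rw [← exp_chebyshev_bound_eq_geometric hlamK]
    exact measure_ofReal_le_le_of_lintegral_expMul_le
      (measurable_coe_nnreal_ennreal.comp hX).lintegral_prod_right' hlam.le hmom' _
  refine le_ofReal_of_forall_lt
    (f := fun r => C * Real.exp (lam * K) / (Real.exp 1 - 1) * Real.exp (c₁ - lam * r))
    (by fun_prop) fun r hr => ?_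
  calc μ _ ≤ μ (⋃ n : ℕ,
        {ω | ENNReal.ofReal (r + K * n) ≤ ∫⁻ s in Ioc 0 (n + 1 : ℝ), (X ω s : ℝ≥0∞)}) :=
        measure_mono fun ω hω => mem_iUnion.2 <| exists_nat_ofReal_add_le_of_le_iSup_tsub
          (monotone_setLIntegral_Ioc _ 0) hK0 hr hω
    _ ≤ _ := measure_iUnion_le _
    _ ≤ _ := ENNReal.tsum_le_tsum (hstep r)
    _ = _ := by
      rw [tsum_ofReal_mul_exp_neg_one_pow_succ (by positivity), mul_div_right_comm]

/-- Tail estimate for the supremum of `S_t − Kt` (Lemma 2.4): if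
`S_t(ω) = ∫₀ᵗ X(ω,s) ds` for a jointly measurable nonnegative process `X` and
`E[exp(λ S_n)] ≤ C exp(c₁ + c₂ n)` for all integers `n ≥ 1`, then with
`K = λ⁻¹(c₂ + 1)` one has, for every `ρ`,
`P{ sup_{t ≥ 0} (S_t − Kt) ≥ ρ } ≤ (C e^{λK}/(e − 1)) exp(c₁ − λρ)`. -/
theorem tail_estimate_sup_integral_minus_linear
    {Ω : Type*} {mΩ : MeasurableSpace Ω} (μ : Measure Ω) [IsProbabilityMeasure μ]
    (X : Ω → ℝ → NNReal) (hX : Measurable (Function.uncurry X))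
    (S : ℝ → Ω → ℝ≥0∞)
    (hS : ∀ t ω, S t ω = ∫⁻ s in Set.Ioc (0 : ℝ) t, (X ω s : ℝ≥0∞))
    (lam C c₁ c₂ : ℝ) (hlam : 0 < lam) (hC : 0 < C) (hc₁ : 0 ≤ c₁) (hc₂ : 0 < c₂)
    (hmom : ∀ n : ℕ, 1 ≤ n →
      ∫⁻ ω, (if S (n : ℝ) ω = ⊤ then ⊤
             else ENNReal.ofReal (Real.exp (lam * (S (n : ℝ) ω).toReal))) ∂μ ≤
        ENNReal.ofReal (C * Real.exp (c₁ + c₂ * n)))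
    (K : ℝ) (hK : K = lam⁻¹ * (c₂ + 1)) (ρ : ℝ) :
    μ {ω | ENNReal.ofReal ρ ≤
        ⨆ (t : ℝ) (_ : 0 ≤ t), (S t ω - ENNReal.ofReal (K * t))} ≤
      ENNReal.ofReal (C * Real.exp (lam * K) / (Real.exp 1 - 1) *
        Real.exp (c₁ - lam * ρ)) :=
  tail_estimate_sup_integral_minus_linear_general (mΩ := mΩ) μ X hX S hS lam C c₁ c₂ hlam hC hc₂
    hmom K hK ρ
end

section
/- Let X be a separable Banach space over ℝ and let μ₁, μ₂ be Borel probability measures on X such that ∫_X e^{c‖x‖} μ_i(dx) ≤ M for i = 1,2, for some constants c > 0 and M ≥ 1. Let d = ‖μ₁ − μ₂‖*_L be their dual-Lipschitz distance. Then there exists a constant C = C(c, M) > 0 such that for every 1-Lipschitz function f : X → ℝ with f(0) = 0 one has |∫_X f dμ₁ − ∫_X f dμ₂| ≤ C √d. -/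
/-!
Truncate `f` at level `R`. The truncation `max (min f R) (-R)` is `1`-Lipschitz and bounded by
`R`, so after division by `R + 1` it is admissible for the dual-Lipschitz distance `d`, and its
integrals against `μ₁` and `μ₂` differ by at most `(R + 1) d`. Since `|f x| ≤ ‖x‖`, the truncation
error is at most `(‖x‖ - R)⁺ ≤ e^{c (‖x‖ - R)} / c`, whose integral is at most `M e^{-cR} / c` by
the exponential moment bound. The choice `R = 1 / (c √d)` balances the two terms:
`R d = √d / c` and `e^{-cR} = e^{-1/√d} ≤ √d`.
-/

open MeasureTheory Real Filter Topology

section Truncation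

variable {α : Type*}

noncomputable def truncateAt (R : ℝ) (f : α → ℝ) (x : α) : ℝ := max (min (f x) R) (-R)

variable {R : ℝ} {f : α → ℝ}

lemma abs_truncateAt_le (hR : 0 ≤ R) (x : α) : |truncateAt R f x| ≤ R := by
  rw [truncateAt, abs_le]
  exact ⟨le_max_right _ _, max_le (min_le_right _ _) (by linarith)⟩

lemma abs_sub_truncateAt_le (x : α) : |f x - truncateAt R f x| ≤ max (|f x| - R) 0 := by
  rw [truncateAt]
  grind

lemma LipschitzWith.truncateAt [PseudoEMetricSpace α] {K} (hf : LipschitzWith K f) :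
    LipschitzWith K (truncateAt R f) :=
  (hf.min_const R).max_const (-R)

end Truncation

lemma le_exp_mul_div {c : ℝ} (hc : 0 < c) (y : ℝ) : y ≤ exp (c * y) / c := by
  rw [le_div_iff₀ hc]
  linarith [add_one_le_exp (c * y)]

lemma max_sub_zero_le_exp_mul_div {c : ℝ} (hc : 0 < c) (t R : ℝ) :
    max (t - R) 0 ≤ exp (c * (t - R)) / c :=
  max_le (le_exp_mul_div hc _) (by positivity)

lemma exp_neg_inv_le {s : ℝ} (hs : 0 < s) : exp (-s⁻¹) ≤ s := by
  rw [exp_neg, inv_le_comm₀ (exp_pos _) hs]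
  linarith [add_one_le_exp s⁻¹]

lemma le_mul_sqrt_of_forall_le {Δ d c K : ℝ} (hc : 0 < c) (hK : 0 ≤ K) (hd : d ≤ 4)
    (h : ∀ R, 0 ≤ R → Δ ≤ (R + 1) * d + K * exp (-(c * R))) : Δ ≤ (1 / c + 2 + K) * √d := by
  rcases le_or_gt d 0 with hd0 | hd0
  · rw [sqrt_eq_zero'.2 hd0, mul_zero]
    have hlim : Tendsto (fun R ↦ K * exp (-(c * R))) atTop (𝓝 0) := by
      simpa using (tendsto_exp_neg_atTop_nhds_zero.comp
        (tendsto_id.const_mul_atTop hc)).const_mul K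
    refine ge_of_tendsto hlim (eventually_ge_atTop 0 |>.mono fun R hR ↦ ?_)
    nlinarith [h R hR]
  · set s := √d
    have hs : 0 < s := sqrt_pos.2 hd0
    have hs2 : s ≤ 2 := sqrt_le_iff.2 ⟨zero_le_two, by norm_num [hd]⟩
    have hds : d = s * s := (mul_self_sqrt hd0.le).symm
    have hcR : c * (c * s)⁻¹ = s⁻¹ := by field_simp
    calc Δ ≤ ((c * s)⁻¹ + 1) * d + K * exp (-(c * (c * s)⁻¹)) := h _ (by positivity)
      _ = s / c + s * s + K * exp (-s⁻¹) := by rw [hcR, hds]; field_simp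
      _ ≤ s / c + 2 * s + K * s := by gcongr; exact exp_neg_inv_le hs
      _ = (1 / c + 2 + K) * s := by ring

section ExpMoment

variable {X : Type*} [SeminormedAddCommGroup X] {c : ℝ}

lemma abs_sub_truncateAt_le_exp {f : X → ℝ} (hc : 0 < c) (hf : LipschitzWith 1 f)
    (hf0 : f 0 = 0) (R : ℝ) (x : X) :
    |f x - truncateAt R f x| ≤ exp (-(c * R)) / c * exp (c * ‖x‖) :=
  calc |f x - truncateAt R f x| ≤ max (|f x| - R) 0 := abs_sub_truncateAt_le x
    _ ≤ max (‖x‖ - R) 0 := by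
      gcongr
      simpa using hf.norm_le_mul hf0 x
    _ ≤ exp (c * (‖x‖ - R)) / c := max_sub_zero_le_exp_mul_div hc _ _
    _ = exp (-(c * R)) / c * exp (c * ‖x‖) := by rw [div_mul_eq_mul_div, ← exp_add]; ring_nf

variable [MeasurableSpace X] [OpensMeasurableSpace X] {μ : Measure X} {M : ℝ}

lemma integrable_exp_mul_norm
    (h : ∫⁻ x, ENNReal.ofReal (exp (c * ‖x‖)) ∂μ ≤ ENNReal.ofReal M) :
    Integrable (fun x ↦ exp (c * ‖x‖)) μ :=
  (lintegral_ofReal_ne_top_iff_integrable (by fun_prop) (ae_of_all _ fun _ ↦ (exp_pos _).le)).1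
    (h.trans_lt ENNReal.ofReal_lt_top).ne

lemma integral_exp_mul_norm_le (hM : 0 ≤ M)
    (h : ∫⁻ x, ENNReal.ofReal (exp (c * ‖x‖)) ∂μ ≤ ENNReal.ofReal M) :
    ∫ x, exp (c * ‖x‖) ∂μ ≤ M := by
  rw [integral_eq_lintegral_of_nonneg_ae (ae_of_all _ fun _ ↦ (exp_pos _).le) (by fun_prop)]
  exact ENNReal.toReal_le_of_le_ofReal hM h

lemma LipschitzWith.integrable_of_integrable_exp_mul_norm {f : X → ℝ} {K} (hc : 0 < c)
    (hf : LipschitzWith K f) (hf0 : f 0 = 0) (hμ : Integrable (fun x ↦ exp (c * ‖x‖)) μ) :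
    Integrable f μ :=
  (hμ.div_const c).const_mul K |>.mono' hf.continuous.aestronglyMeasurable <|
    ae_of_all _ fun x ↦ (hf.norm_le_mul hf0 x).trans <|
      mul_le_mul_of_nonneg_left (le_exp_mul_div hc _) K.coe_nonneg

lemma abs_integral_sub_integral_truncateAt_le {f : X → ℝ} (hc : 0 < c) (hM : 0 ≤ M)
    (hμ : ∫⁻ x, ENNReal.ofReal (exp (c * ‖x‖)) ∂μ ≤ ENNReal.ofReal M)
    (hf : LipschitzWith 1 f) (hf0 : f 0 = 0) (R : ℝ) :
    |∫ x, f x ∂μ - ∫ x, truncateAt R f x ∂μ| ≤ M / c * exp (-(c * R)) := by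
  have hexp := integrable_exp_mul_norm hμ
  have htail := abs_sub_truncateAt_le_exp hc hf hf0 R
  have hdiff : Integrable (fun x ↦ f x - truncateAt R f x) μ :=
    (hexp.const_mul _).mono' (hf.continuous.sub hf.truncateAt.continuous).aestronglyMeasurable
      (ae_of_all _ htail)
  have hsplit : ∫ x, truncateAt R f x ∂μ = ∫ x, f x ∂μ - ∫ x, f x - truncateAt R f x ∂μ := by
    rw [← integral_sub (hf.integrable_of_integrable_exp_mul_norm hc hf0 hexp) hdiff]
    simp only [sub_sub_cancel]
  calc |∫ x, f x ∂μ - ∫ x, truncateAt R f x ∂μ|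
      = |∫ x, f x - truncateAt R f x ∂μ| := by rw [hsplit, sub_sub_cancel]
    _ ≤ ∫ x, exp (-(c * R)) / c * exp (c * ‖x‖) ∂μ :=
      abs_integral_le_integral_abs.trans <|
        integral_mono_of_nonneg (ae_of_all _ fun _ ↦ abs_nonneg _) (hexp.const_mul _)
          (ae_of_all _ htail)
    _ ≤ exp (-(c * R)) / c * M := by
      rw [integral_const_mul]
      gcongr
      exact integral_exp_mul_norm_le hM hμ
    _ = M / c * exp (-(c * R)) := by ring

end ExpMoment

section DualLipschitz

variable {X : Type*} [MeasurableSpace X] (μ₁ μ₂ : Measure X)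

lemma abs_integral_sub_integral_le [IsFiniteMeasure μ₁] [IsFiniteMeasure μ₂]
    {f : X → ℝ} {a : ℝ} (hf : ∀ x, |f x| ≤ a) :
    |∫ x, f x ∂μ₁ - ∫ x, f x ∂μ₂| ≤ a * (μ₁.real Set.univ + μ₂.real Set.univ) := by
  have bound (μ : Measure X) [IsFiniteMeasure μ] : |∫ x, f x ∂μ| ≤ a * μ.real Set.univ :=
    norm_integral_le_of_norm_le_const (μ := μ) (f := f) (ae_of_all _ hf)
  linarith [abs_sub (∫ x, f x ∂μ₁) (∫ x, f x ∂μ₂), bound μ₁, bound μ₂]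

variable [PseudoMetricSpace X]

/-- The supremum of this set is the dual-Lipschitz distance `‖μ₁ - μ₂‖*_L`. -/
def dualLipschitzGaps : Set ℝ :=
  {r : ℝ | ∃ f : X → ℝ, ∃ a b : NNReal, (a : ℝ) + (b : ℝ) ≤ 1 ∧
    (∀ x, |f x| ≤ a) ∧ LipschitzWith b f ∧ r = |(∫ x, f x ∂μ₁) - ∫ x, f x ∂μ₂|}

lemma zero_mem_dualLipschitzGaps : (0 : ℝ) ∈ dualLipschitzGaps μ₁ μ₂ :=
  ⟨fun _ ↦ 0, 0, 0, by norm_num, fun _ ↦ by simp, LipschitzWith.const 0, by simp⟩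

variable [IsFiniteMeasure μ₁] [IsFiniteMeasure μ₂]

lemma dualLipschitzGaps_le {r : ℝ} (hr : r ∈ dualLipschitzGaps μ₁ μ₂) :
    r ≤ μ₁.real Set.univ + μ₂.real Set.univ := by
  obtain ⟨f, a, b, hab, hfa, -, rfl⟩ := hr
  refine (abs_integral_sub_integral_le μ₁ μ₂ hfa).trans (le_of_le_of_eq ?_ (one_mul _))
  gcongr
  linarith [b.coe_nonneg]

lemma bddAbove_dualLipschitzGaps : BddAbove (dualLipschitzGaps μ₁ μ₂) :=
  ⟨_, fun _ ↦ dualLipschitzGaps_le μ₁ μ₂⟩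

lemma abs_integral_sub_integral_le_mul_sSup_dualLipschitzGaps {g : X → ℝ} {R : ℝ} (hR : 0 ≤ R)
    (hgR : ∀ x, |g x| ≤ R) (hg : LipschitzWith 1 g) :
    |∫ x, g x ∂μ₁ - ∫ x, g x ∂μ₂| ≤ (R + 1) * sSup (dualLipschitzGaps μ₁ μ₂) := by
  have hR1 : 0 < R + 1 := by linarith
  have hmem : |∫ x, g x / (R + 1) ∂μ₁ - ∫ x, g x / (R + 1) ∂μ₂| ∈ dualLipschitzGaps μ₁ μ₂ := by
    refine ⟨fun x ↦ g x / (R + 1), (R / (R + 1)).toNNReal, (1 / (R + 1)).toNNReal, ?_, ?_, ?_, rfl⟩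
    · rw [Real.coe_toNNReal _ (by positivity), Real.coe_toNNReal _ (by positivity), ← add_div,
        div_self hR1.ne']
    · intro x
      rw [Real.coe_toNNReal _ (by positivity), abs_div, abs_of_pos hR1]
      gcongr
      exact hgR x
    · refine LipschitzWith.of_dist_le_mul fun x y ↦ ?_
      rw [Real.coe_toNNReal _ (by positivity), Real.dist_eq, ← sub_div, abs_div, abs_of_pos hR1,
        div_mul_eq_mul_div, one_mul]
      gcongr
      simpa [Real.dist_eq] using hg.dist_le_mul x y
  rw [← div_le_iff₀' hR1]
  convert le_csSup (bddAbove_dualLipschitzGaps μ₁ μ₂) hmem using 1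
  rw [integral_div, integral_div, ← sub_div, abs_div, abs_of_pos hR1]

end DualLipschitz

lemma sSup_dualLipschitzGaps_le_two {X : Type*} [PseudoMetricSpace X] [MeasurableSpace X]
    (μ₁ μ₂ : Measure X) [IsProbabilityMeasure μ₁] [IsProbabilityMeasure μ₂] :
    sSup (dualLipschitzGaps μ₁ μ₂) ≤ 2 := by
  refine csSup_le ⟨0, zero_mem_dualLipschitzGaps μ₁ μ₂⟩ fun r hr ↦ ?_
  simpa [one_add_one_eq_two] using dualLipschitzGaps_le μ₁ μ₂ hr

lemma abs_integral_sub_integral_le_of_exp_moment {X : Type*} [SeminormedAddCommGroup X]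
    [MeasurableSpace X] [OpensMeasurableSpace X] {μ₁ μ₂ : Measure X} [IsFiniteMeasure μ₁]
    [IsFiniteMeasure μ₂] {c M R : ℝ} (hc : 0 < c) (hM : 0 ≤ M)
    (h₁ : ∫⁻ x, ENNReal.ofReal (exp (c * ‖x‖)) ∂μ₁ ≤ ENNReal.ofReal M)
    (h₂ : ∫⁻ x, ENNReal.ofReal (exp (c * ‖x‖)) ∂μ₂ ≤ ENNReal.ofReal M)
    {f : X → ℝ} (hf : LipschitzWith 1 f) (hf0 : f 0 = 0) (hR : 0 ≤ R) :
    |∫ x, f x ∂μ₁ - ∫ x, f x ∂μ₂| ≤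
      (R + 1) * sSup (dualLipschitzGaps μ₁ μ₂) + 2 * M / c * exp (-(c * R)) := by
  set F₁ := ∫ x, f x ∂μ₁
  set F₂ := ∫ x, f x ∂μ₂
  set G₁ := ∫ x, truncateAt R f x ∂μ₁
  set G₂ := ∫ x, truncateAt R f x ∂μ₂
  calc |F₁ - F₂| = |(F₁ - G₁) + (G₁ - G₂) - (F₂ - G₂)| := by ring_nf
    _ ≤ |F₁ - G₁| + |G₁ - G₂| + |F₂ - G₂| := (abs_sub _ _).trans (by gcongr; exact abs_add_le _ _)
    _ ≤ M / c * exp (-(c * R)) + (R + 1) * sSup (dualLipschitzGaps μ₁ μ₂)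
          + M / c * exp (-(c * R)) := by
      gcongr
      · exact abs_integral_sub_integral_truncateAt_le hc hM h₁ hf hf0 R
      · exact abs_integral_sub_integral_le_mul_sSup_dualLipschitzGaps μ₁ μ₂ hR
          (abs_truncateAt_le hR) hf.truncateAt
      · exact abs_integral_sub_integral_truncateAt_le hc hM h₂ hf hf0 R
    _ = (R + 1) * sSup (dualLipschitzGaps μ₁ μ₂) + 2 * M / c * exp (-(c * R)) := by ring

/-- Estimate of the Kantorovich distance by the dual-Lipschitz distance (Section 4.2):
if two Borel probability measures on a separable Banach space `X` have exponential
moments `∫ e^{c‖x‖} dμᵢ ≤ M`, and `d` is their dual-Lipschitz distance, then there is a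
constant `C = C(c, M) > 0` such that `|∫ f dμ₁ − ∫ f dμ₂| ≤ C √d` for every
`1`-Lipschitz `f : X → ℝ` with `f 0 = 0`. -/
theorem kantorovich_le_sqrt_dual_lipschitz (c M : ℝ) (hc : 0 < c) (hM : 1 ≤ M) :
    ∃ C : ℝ, 0 < C ∧
      ∀ (X : Type) [NormedAddCommGroup X] [NormedSpace ℝ X] [MeasurableSpace X]
        [BorelSpace X] [TopologicalSpace.SeparableSpace X]
        (μ₁ μ₂ : Measure X) [IsProbabilityMeasure μ₁] [IsProbabilityMeasure μ₂],
        (∫⁻ x, ENNReal.ofReal (Real.exp (c * ‖x‖)) ∂μ₁ ≤ ENNReal.ofReal M) →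
        (∫⁻ x, ENNReal.ofReal (Real.exp (c * ‖x‖)) ∂μ₂ ≤ ENNReal.ofReal M) →
        ∀ d : ℝ,
          d = sSup {r : ℝ | ∃ f : X → ℝ, ∃ a b : NNReal, (a : ℝ) + (b : ℝ) ≤ 1 ∧
                (∀ x, |f x| ≤ a) ∧ LipschitzWith b f ∧
                r = |(∫ x, f x ∂μ₁) - ∫ x, f x ∂μ₂|} →
          ∀ f : X → ℝ, LipschitzWith 1 f → f 0 = 0 →
            |(∫ x, f x ∂μ₁) - ∫ x, f x ∂μ₂| ≤ C * Real.sqrt d := by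
  have hM0 : 0 ≤ M := by linarith
  refine ⟨1 / c + 2 + 2 * M / c, by positivity, ?_⟩
  intro X _ _ _ _ _ μ₁ μ₂ _ _ h₁ h₂ d hd f hf hf0
  change d = sSup (dualLipschitzGaps μ₁ μ₂) at hd
  subst hd
  exact le_mul_sqrt_of_forall_le hc (by positivity)
    ((sSup_dualLipschitzGaps_le_two μ₁ μ₂).trans (by norm_num))
    fun R hR ↦ abs_integral_sub_integral_le_of_exp_moment hc hM0 h₁ h₂ hf hf0 hR
end
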